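/- arXiv:1704.07165 — 5 statements merged into one kernel-verified Lean document; each statement's English description precedes it below -/
import Mathlib

section
/- Let Γ be a finite simple k-regular graph of girth g, let Υ be any simple graph of order k, and let ρ be any vertex-neighborhood labeling of Γ. Then every cycle of the generalized truncation T(Γ,ρ;Υ) that contains a blue edge has length at least 2g. -/
/-! Contracting the red edges of a cycle `C` of `T(Γ,ρ;Υ)` leaves a closed walk in `Γ` whose
edges are the projections of the blue edges of `C`. A blue edge is determined by its projection,
so this walk is a trail, nonempty when `C` has a blue edge, and therefore has length at least the
girth `g`. On the other hand every vertex `(u, i)` has exactly one blue neighbour, namely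
`(w, ρ w u)` for the unique `w` with `ρ u w = i`; so the blue edges form a matching and at most
half of the edges of `C` are blue. -/

open SimpleGraph

variable {V W : Type*}

/-- The generalized truncation `T(Γ,ρ;Υ)` of a graph `Γ` by a graph `Υ`,
with respect to a labeling `ρ` of the darts of `Γ` by vertices of `Υ`. -/
def trunc (Γ : SimpleGraph V) (Υ : SimpleGraph W)
    (ρ : ∀ u w : V, Γ.Adj u w → W) : SimpleGraph (V × W) where
  Adj x y := (x.1 = y.1 ∧ Υ.Adj x.2 y.2) ∨
    (∃ h : Γ.Adj x.1 y.1, x.2 = ρ x.1 y.1 h ∧ y.2 = ρ y.1 x.1 h.symm)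
  symm := by
    constructor
    rintro ⟨u, i⟩ ⟨w, j⟩ (⟨h1, h2⟩ | ⟨h, h1, h2⟩)
    · exact Or.inl ⟨h1.symm, h2.symm⟩
    · exact Or.inr ⟨h.symm, h2, h1⟩
  loopless := by
    constructor
    rintro ⟨u, i⟩ (⟨_, h⟩ | ⟨h, _⟩)
    · exact Υ.irrefl h
    · exact Γ.irrefl h

/-- `ρ` is a vertex-neighborhood labeling of `Γ`: for every vertex `u`, the restriction
of `ρ` to the darts emanating from `u` is a bijection onto the vertex set of `Υ`. -/
def IsVNLabeling (Γ : SimpleGraph V) (ρ : ∀ u w : V, Γ.Adj u w → W) : Prop :=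
  ∀ u : V, ∀ i : W, ∃! w : V, ∃ h : Γ.Adj u w, ρ u w h = i

/-- A permutation of the vertices is an automorphism of the graph. -/
def IsAut (Γ : SimpleGraph V) (π : Equiv.Perm V) : Prop :=
  ∀ a b : V, Γ.Adj (π a) (π b) ↔ Γ.Adj a b

/-- The automorphism group of a graph, as a subgroup of the symmetric group. -/
def autG (Γ : SimpleGraph V) : Subgroup (Equiv.Perm V) where
  carrier := {π | IsAut Γ π}
  one_mem' := by intro a b; rfl
  mul_mem' := by
    intro f g hf hg a b
    exact (hf (g a) (g b)).trans (hg a b)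
  inv_mem' := by
    intro f hf a b
    conv_rhs => rw [← f.apply_symm_apply a, ← f.apply_symm_apply b]
    exact (hf _ _).symm

namespace SimpleGraph

variable {X : Type*} {G : SimpleGraph V} {H : SimpleGraph X}

namespace Walk

theorem IsCycle.card_support_toFinset [DecidableEq X] {u : X} {c : H.Walk u u}
    (hc : c.IsCycle) : c.support.toFinset.card = c.length := by
  have hu : u ∈ c.support.tail := end_mem_tail_support hc.not_nil
  rw [← cons_tail_support, List.toFinset_cons, Finset.insert_eq_of_mem (List.mem_toFinset.2 hu),
    List.toFinset_card_of_nodup hc.support_nodup, List.length_tail, length_support,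
    Nat.add_sub_cancel]

theorem IsCycle.two_mul_length_filter_edges_le {u : X} {c : H.Walk u u} (hc : c.IsCycle)
    (P : Sym2 X → Prop) [DecidablePred P]
    (hP : ∀ ⦃a b b'⦄, H.Adj a b → H.Adj a b' → P s(a, b) → P s(a, b') → b = b') :
    2 * (c.edges.filter P).length ≤ c.length := by
  classical
  -- Double count incidences between the `P`-edges of `c` and the vertices of `c`.
  set s := (c.edges.filter P).toFinset
  set t := c.support.toFinset
  have hs : s.card = (c.edges.filter P).length :=
    List.toFinset_card_of_nodup (hc.edges_nodup.filter _)
  have hcount := Finset.card_mul_le_card_mul (fun e v => v ∈ e) (s := s) (t := t) (m := 2) (n := 1)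
    (fun e he => ?_) (fun v _ => ?_)
  · rw [hs, hc.card_support_toFinset] at hcount
    omega
  · obtain ⟨he, -⟩ := List.mem_filter.1 (List.mem_toFinset.1 he)
    induction e using Sym2.ind with | _ a b => ?_
    have hab : a ≠ b := (c.edges_subset_edgeSet he : H.Adj a b).ne
    calc 2 = ({a, b} : Finset X).card := (Finset.card_pair hab).symm
      _ ≤ _ := Finset.card_le_card fun v hv => by
        rcases Finset.mem_insert.1 hv with rfl | hv
        · exact Finset.mem_filter.2 ⟨List.mem_toFinset.2 (c.fst_mem_support_of_mem_edges he),
            Sym2.mem_mk_left _ _⟩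
        · rw [Finset.mem_singleton.1 hv]
          exact Finset.mem_filter.2 ⟨List.mem_toFinset.2 (c.snd_mem_support_of_mem_edges he),
            Sym2.mem_mk_right _ _⟩
  · refine Finset.card_le_one.2 fun e he f hf => ?_
    obtain ⟨he, hve⟩ := Finset.mem_filter.1 he
    obtain ⟨hf, hvf⟩ := Finset.mem_filter.1 hf
    obtain ⟨he, hPe⟩ := List.mem_filter.1 (List.mem_toFinset.1 he)
    obtain ⟨hf, hPf⟩ := List.mem_filter.1 (List.mem_toFinset.1 hf)
    obtain ⟨b, rfl⟩ := Sym2.mem_iff_exists.1 hve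
    obtain ⟨b', rfl⟩ := Sym2.mem_iff_exists.1 hvf
    obtain rfl := hP (c.edges_subset_edgeSet he) (c.edges_subset_edgeSet hf)
      (of_decide_eq_true hPe) (of_decide_eq_true hPf)
    rfl

variable [DecidableEq V] (f : X → V) (hf : ∀ ⦃a b⦄, H.Adj a b → f a ≠ f b → G.Adj (f a) (f b))

def contract : ∀ {a b : X}, H.Walk a b → G.Walk (f a) (f b)
  | _, _, nil => nil
  | a, _, cons (v := b) h p =>
    if heq : f a = f b then (p.contract).copy heq.symm rfl else cons (hf h heq) p.contract

variable {f hf}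

theorem edges_contract {a b : X} (p : H.Walk a b) :
    (p.contract f hf).edges = (p.edges.filter fun e => ¬(e.map f).IsDiag).map (Sym2.map f) := by
  induction p with
  | nil => rfl
  | @cons a b _ h p ih =>
    by_cases heq : f a = f b <;> simp [contract, heq, ih]

theorem length_contract {a b : X} (p : H.Walk a b) :
    (p.contract f hf).length = (p.edges.filter fun e => ¬(e.map f).IsDiag).length := by
  rw [← length_edges, edges_contract, List.length_map]

theorem IsTrail.contract {a b : X} {p : H.Walk a b} (hp : p.IsTrail)
    (hinj : Set.InjOn (Sym2.map f) {e | e ∈ H.edgeSet ∧ ¬(e.map f).IsDiag}) :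
    (p.contract f hf).IsTrail := by
  refine ⟨?_⟩
  rw [edges_contract]
  refine (hp.edges_nodup.filter _).map_on fun e he e' he' => hinj ?_ ?_
  · obtain ⟨he, hd⟩ := List.mem_filter.1 he
    exact ⟨p.edges_subset_edgeSet he, of_decide_eq_true hd⟩
  · obtain ⟨he, hd⟩ := List.mem_filter.1 he'
    exact ⟨p.edges_subset_edgeSet he, of_decide_eq_true hd⟩

end Walk
end SimpleGraph

section Truncation

variable {Γ : SimpleGraph V} {Υ : SimpleGraph W} {ρ : ∀ u w : V, Γ.Adj u w → W}

theorem trunc_adj_of_fst_ne {a b : V × W} (hab : (trunc Γ Υ ρ).Adj a b) (hne : a.1 ≠ b.1) :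
    ∃ h : Γ.Adj a.1 b.1, a.2 = ρ a.1 b.1 h ∧ b.2 = ρ b.1 a.1 h.symm :=
  hab.resolve_left fun h => hne h.1

theorem trunc_eq_of_adj_of_fst_ne (hρ : IsVNLabeling Γ ρ) {a b c : V × W}
    (hab : (trunc Γ Υ ρ).Adj a b) (hac : (trunc Γ Υ ρ).Adj a c)
    (hneb : a.1 ≠ b.1) (hnec : a.1 ≠ c.1) : b = c := by
  obtain ⟨hΓb, ha, hb⟩ := trunc_adj_of_fst_ne hab hneb
  obtain ⟨hΓc, ha', hc⟩ := trunc_adj_of_fst_ne hac hnec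
  obtain ⟨b1, b2⟩ := b
  obtain ⟨c1, c2⟩ := c
  obtain rfl : b1 = c1 := (hρ a.1 a.2).unique ⟨hΓb, ha.symm⟩ ⟨hΓc, ha'.symm⟩
  exact Prod.ext rfl (hb.trans hc.symm)

theorem trunc_eq_of_fst_eq {a b a' b' : V × W}
    (hab : (trunc Γ Υ ρ).Adj a b) (hab' : (trunc Γ Υ ρ).Adj a' b') (hne : a.1 ≠ b.1)
    (ha : a.1 = a'.1) (hb : b.1 = b'.1) : a = a' ∧ b = b' := by
  obtain ⟨a1, a2⟩ := a
  obtain ⟨b1, b2⟩ := b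
  obtain ⟨a1', a2'⟩ := a'
  obtain ⟨b1', b2'⟩ := b'
  obtain rfl : a1 = a1' := ha
  obtain rfl : b1 = b1' := hb
  obtain ⟨_, ha2, hb2⟩ := trunc_adj_of_fst_ne hab hne
  obtain ⟨_, ha2', hb2'⟩ := trunc_adj_of_fst_ne hab' hne
  exact ⟨Prod.ext rfl (ha2.trans ha2'.symm), Prod.ext rfl (hb2.trans hb2'.symm)⟩

theorem trunc_injOn_map_fst :
    Set.InjOn (Sym2.map Prod.fst)
      {e : Sym2 (V × W) | e ∈ (trunc Γ Υ ρ).edgeSet ∧ ¬(e.map Prod.fst).IsDiag} := by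
  rintro e ⟨he, hd⟩ e' ⟨he', -⟩ heq
  induction e using Sym2.ind with | _ a b => ?_
  induction e' using Sym2.ind with | _ a' b' => ?_
  simp only [Sym2.map_mk, Sym2.mk_isDiag_iff, Sym2.eq_iff] at hd heq
  rcases heq with ⟨ha, hb⟩ | ⟨ha, hb⟩
  · obtain ⟨rfl, rfl⟩ := trunc_eq_of_fst_eq he he' hd ha hb
    rfl
  · obtain ⟨rfl, rfl⟩ := trunc_eq_of_fst_eq he (SimpleGraph.adj_symm _ he') hd ha hb
    exact Sym2.eq_swap

end Truncation

theorem stmt0_general {V W : Type*} {g : ℕ} (Γ : SimpleGraph V) (Υ : SimpleGraph W)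
    (hgirth : Γ.egirth = (g : ℕ∞))
    (ρ : ∀ u w : V, Γ.Adj u w → W) (hρ : IsVNLabeling Γ ρ)
    (x : V × W) (c : (trunc Γ Υ ρ).Walk x x) (hc : c.IsCycle)
    (hblue : ∃ a b : V × W, a.1 ≠ b.1 ∧ s(a, b) ∈ c.edges) :
    2 * g ≤ c.length := by
  classical
  let q : Γ.Walk x.1 x.1 :=
    c.contract Prod.fst fun _ _ hab hne => (trunc_adj_of_fst_ne hab hne).fst
  have hpos : 0 < q.length := by
    obtain ⟨a, b, hne, hab⟩ := hblue
    rw [Walk.length_contract]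
    exact List.length_pos_of_mem (List.mem_filter.2 ⟨hab, by simpa using hne⟩)
  have hq : q.IsCircuit := by
    refine ⟨hc.isTrail.contract trunc_injOn_map_fst, fun hnil => ?_⟩
    rw [hnil, Walk.length_nil] at hpos
    exact hpos.false
  have hg : g ≤ q.length := by exact_mod_cast hgirth ▸ hq.egirth_le_length
  have hblue_half : 2 * q.length ≤ c.length := by
    rw [Walk.length_contract]
    exact hc.two_mul_length_filter_edges_le _ fun _ _ _ hab hab' hPb hPb' =>
      trunc_eq_of_adj_of_fst_ne hρ hab hab' (by simpa using hPb) (by simpa using hPb')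
  omega

/-- If `Γ` is a finite simple `k`-regular graph of girth `g`, `Υ` is any
simple graph of order `k`, and `ρ` is any vertex-neighborhood labeling of `Γ`, then every
cycle of the generalized truncation `T(Γ,ρ;Υ)` containing a blue edge (an edge whose
endpoints lie in different copies of `Υ`) has length at least `2 * g`. -/
theorem stmt0 {V W : Type*} [Fintype V] [Fintype W] [DecidableEq V] [DecidableEq W]
    {k g : ℕ} (Γ : SimpleGraph V) [DecidableRel Γ.Adj] (Υ : SimpleGraph W)
    (hreg : Γ.IsRegularOfDegree k) (hcard : Fintype.card W = k)
    (hgirth : Γ.egirth = (g : ℕ∞))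
    (ρ : ∀ u w : V, Γ.Adj u w → W) (hρ : IsVNLabeling Γ ρ)
    (x : V × W) (c : (trunc Γ Υ ρ).Walk x x) (hc : c.IsCycle)
    (hblue : ∃ a b : V × W, a.1 ≠ b.1 ∧ s(a, b) ∈ c.edges) :
    2 * g ≤ c.length :=
  stmt0_general Γ Υ hgirth ρ hρ x c hc hblue
end

section
/- Let T(Γ,ρ;Υ) be a generalized truncation. The only automorphism of T(Γ,ρ;Υ) that fixes each part of the natural partition P_Γ setwise is the identity. -/
open SimpleGraph

variable {V W : Type*}

/-!
Every vertex `(u, i)` of `T(Γ,ρ;Υ)` is the end of a blue edge, going to the part of the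
neighbour `w` of `u` with `ρ(u,w) = i`, and `(u, ρ(u,w))` is the only vertex of the part of `u`
adjacent to the part of `w`. An automorphism fixing every part maps this blue edge to an edge
between the same two parts, hence fixes `(u, i)`.
-/

namespace trunc

variable {Γ : SimpleGraph V} {Υ : SimpleGraph W} {ρ : ∀ u w : V, Γ.Adj u w → W} {u w : V}

theorem adj_of_adj (h : Γ.Adj u w) : (trunc Γ Υ ρ).Adj (u, ρ u w h) (w, ρ w u h.symm) :=
  Or.inr ⟨h, rfl, rfl⟩

theorem eq_label_of_adj_of_ne {i j : W} (hadj : (trunc Γ Υ ρ).Adj (u, i) (w, j)) (hne : u ≠ w) :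
    ∃ h : Γ.Adj u w, i = ρ u w h ∧ j = ρ w u h.symm := by
  rcases hadj with ⟨heq, -⟩ | hblue
  · exact absurd heq hne
  · exact hblue

theorem apply_eq_self_of_adj {π : Equiv.Perm (V × W)} (hπ : IsAut (trunc Γ Υ ρ) π)
    (hfix : ∀ x : V × W, (π x).1 = x.1) (h : Γ.Adj u w) :
    π (u, ρ u w h) = (u, ρ u w h) := by
  have hu : π (u, ρ u w h) = (u, (π (u, ρ u w h)).2) := Prod.ext (hfix _) rfl
  have hw : π (w, ρ w u h.symm) = (w, (π (w, ρ w u h.symm)).2) := Prod.ext (hfix _) rfl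
  have himage := (hπ _ _).mpr (adj_of_adj h)
  rw [hu, hw] at himage
  obtain ⟨_, hlabel, -⟩ := eq_label_of_adj_of_ne himage h.ne
  rw [hu, hlabel]

end trunc

theorem stmt1_general {V W : Type*}
    (Γ : SimpleGraph V) (Υ : SimpleGraph W)
    (ρ : ∀ u w : V, Γ.Adj u w → W) (hρ : IsVNLabeling Γ ρ)
    (π : Equiv.Perm (V × W)) (hπ : IsAut (trunc Γ Υ ρ) π)
    (hfix : ∀ x : V × W, (π x).1 = x.1) :
    π = 1 := by
  ext1 ⟨u, i⟩
  obtain ⟨w, ⟨h, rfl⟩, -⟩ := hρ u i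
  exact trunc.apply_eq_self_of_adj hπ hfix h

/-- The only automorphism of a generalized truncation `T(Γ,ρ;Υ)` fixing
each part `V(Γ̃_u) = {(u, i) : i ∈ V(Υ)}` of the natural partition setwise is the identity. -/
theorem stmt1 {V W : Type*} [Fintype V] [Fintype W] [DecidableEq V] [DecidableEq W]
    {k : ℕ} (Γ : SimpleGraph V) [DecidableRel Γ.Adj] (Υ : SimpleGraph W)
    (hreg : Γ.IsRegularOfDegree k) (hcard : Fintype.card W = k)
    (ρ : ∀ u w : V, Γ.Adj u w → W) (hρ : IsVNLabeling Γ ρ)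
    (π : Equiv.Perm (V × W)) (hπ : IsAut (trunc Γ Υ ρ) π)
    (hfix : ∀ x : V × W, (π x).1 = x.1) :
    π = 1 :=
  stmt1_general Γ Υ ρ hρ π hπ hfix
end

section
/- Let Γ, G, v, O_v and T(Γ,G;O_v) be as in the construction. A subgroup K ≤ Aut(Γ) containing G lifts to Aut(T(Γ,G;O_v)) (that is, for every g ∈ K the permutation (u,w) ↦ (u^g,w^g) of the vertex set of T(Γ,G;O_v) is an automorphism of T(Γ,G;O_v)) if and only if O_v is a union of orbits of the induced action of the stabilizer K_v on the 2-element subsets of Γ(v). In particular, G itself lifts to Aut(T(Γ,G;O_v)). -/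
/-!
The red edge `(a, b) ~ (a, d)` is present iff `∃ h ∈ G, h a = v ∧ {h b, h d} ∈ O`.
When `G` is transitive and `O` is invariant under `K_v ⊇ G_v`, the choice of `h` does not
matter, and the condition may be read as `∀ h ∈ K, h a = v → {h b, h d} ∈ O`, which is visibly
preserved by `K`; so `K` lifts. Conversely, the red edges between darts with tail `v` form
exactly the orbital graph of `O` (because `O` is `G_v`-invariant), so a lift of `g ∈ K_v` that
is an automorphism of `T(Γ,G;O_v)` must map `O` into itself.
-/

open SimpleGraph

variable {V : Type*}

/-- The generalized truncation `T(Γ,G;O_v)`: its vertices are the darts `(u,w)` of `Γ`;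
`(u,w)` is adjacent to `(w,u)` (blue edges), and `(u,w)` is adjacent to `(u,w')` whenever
there is a `g ∈ G` with `u^g = v` and `{w^g, w'^g} ∈ O` (red edges). -/
def truncT (Γ : SimpleGraph V) (G : Set (Equiv.Perm V)) (v : V) (O : Set (Sym2 V)) :
    SimpleGraph {p : V × V // Γ.Adj p.1 p.2} :=
  SimpleGraph.fromRel (fun x y =>
    (y.1.1 = x.1.2 ∧ y.1.2 = x.1.1) ∨
    (x.1.1 = y.1.1 ∧ ∃ g ∈ G, g x.1.1 = v ∧ s(g x.1.2, g y.1.2) ∈ O))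

/-- The orbital graph `(Γ(v), O)`: vertex set is the neighborhood of `v`, edge set `O`. -/
def orbitalGraph (Γ : SimpleGraph V) (v : V) (O : Set (Sym2 V)) :
    SimpleGraph (Γ.neighborSet v) :=
  SimpleGraph.fromRel (fun a b => s((a : V), (b : V)) ∈ O)

/-- The lift of an automorphism `g` of `Γ` to a permutation of the darts of `Γ`,
`(u,w) ↦ (u^g, w^g)`. -/
def liftPerm (Γ : SimpleGraph V) (g : Equiv.Perm V) (hg : IsAut Γ g) :
    Equiv.Perm {p : V × V // Γ.Adj p.1 p.2} :=
  Equiv.Perm.subtypePerm (Equiv.prodCongr g g) (fun x => hg x.1 x.2)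

@[simp]
theorem liftPerm_coe (Γ : SimpleGraph V) (g : Equiv.Perm V) (hg : IsAut Γ g)
    (x : {p : V × V // Γ.Adj p.1 p.2}) :
    (liftPerm Γ g hg x : V × V) = (g x.1.1, g x.1.2) := rfl

section Truncation

variable {Γ : SimpleGraph V} {G K : Subgroup (Equiv.Perm V)} {v : V} {O : Set (Sym2 V)}

theorem exists_red_iff_forall (hGtrans : ∀ a b : V, ∃ g ∈ G, g a = b) (hGK : G ≤ K)
    (hO : ∀ p ∈ O, ∀ g ∈ K, g v = v → p.map ⇑g ∈ O) (a b d : V) :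
    (∃ h ∈ G, h a = v ∧ s(h b, h d) ∈ O) ↔ ∀ h ∈ K, h a = v → s(h b, h d) ∈ O := by
  constructor
  · rintro ⟨h, hG, hav, hbd⟩ k hk hkv
    simpa using hO _ hbd (k * h⁻¹) (mul_mem hk (inv_mem (hGK hG))) (by simp [← hav, hkv])
  · intro hall
    obtain ⟨h, hG, hav⟩ := hGtrans a v
    exact ⟨h, hG, hav, hall h (hGK hG) hav⟩

theorem exists_red_map_iff (hGtrans : ∀ a b : V, ∃ g ∈ G, g a = b) (hGK : G ≤ K)
    (hO : ∀ p ∈ O, ∀ g ∈ K, g v = v → p.map ⇑g ∈ O) {g : Equiv.Perm V} (hg : g ∈ K)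
    (a b d : V) :
    (∃ h ∈ G, h (g a) = v ∧ s(h (g b), h (g d)) ∈ O) ↔
      ∃ h ∈ G, h a = v ∧ s(h b, h d) ∈ O := by
  rw [exists_red_iff_forall hGtrans hGK hO, exists_red_iff_forall hGtrans hGK hO]
  constructor
  · intro hall k hk hkv
    simpa using hall (k * g⁻¹) (mul_mem hk (inv_mem hg)) (by simpa using hkv)
  · intro hall k hk hkv
    exact hall (k * g) (mul_mem hk hg) hkv

theorem isAut_truncT_liftPerm (hGtrans : ∀ a b : V, ∃ g ∈ G, g a = b) (hGK : G ≤ K)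
    (hO : ∀ p ∈ O, ∀ g ∈ K, g v = v → p.map ⇑g ∈ O) {g : Equiv.Perm V} (hg : g ∈ K)
    (hgΓ : IsAut Γ g) :
    IsAut (truncT Γ G v O) (liftPerm Γ g hgΓ) := by
  rintro ⟨⟨a, b⟩, hab⟩ ⟨⟨c, d⟩, hcd⟩
  simp only [truncT, fromRel_adj, (liftPerm Γ g hgΓ).injective.ne_iff, liftPerm_coe,
    g.injective.eq_iff, SetLike.mem_coe]
  rw [exists_red_map_iff hGtrans hGK hO hg, exists_red_map_iff hGtrans hGK hO hg]

theorem exists_stab_red_iff (hOinv : ∀ p ∈ O, ∀ g ∈ G, g v = v → p.map ⇑g ∈ O) (b d : V) :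
    (∃ h ∈ G, h v = v ∧ s(h b, h d) ∈ O) ↔ s(b, d) ∈ O := by
  constructor
  · rintro ⟨h, hG, hv, hbd⟩
    simpa using hOinv _ hbd h⁻¹ (inv_mem hG) (Equiv.Perm.inv_eq_iff_eq.2 hv.symm)
  · exact fun hbd => ⟨1, one_mem G, rfl, hbd⟩

theorem truncT_adj_iff_of_fst_eq (hOinv : ∀ p ∈ O, ∀ g ∈ G, g v = v → p.map ⇑g ∈ O)
    {x y : {p : V × V // Γ.Adj p.1 p.2}} (hx : x.1.1 = v) (hy : y.1.1 = v) :
    (truncT Γ G v O).Adj x y ↔ x ≠ y ∧ s(x.1.2, y.1.2) ∈ O := by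
  obtain ⟨⟨a, b⟩, hab⟩ := x
  obtain ⟨⟨c, d⟩, hcd⟩ := y
  simp only at hx hy
  subst hx hy
  have hblue : ∀ {u w w' : V}, Γ.Adj u w → ¬(u = w ∧ w' = u) := fun h h' => h.ne h'.1
  simp only [truncT, fromRel_adj, SetLike.mem_coe, true_and, exists_stab_red_iff hOinv,
    Sym2.eq_swap (a := d), hblue hab, hblue hcd, false_or, or_self]

theorem map_mem_of_isAut_liftPerm (hOsub : ∀ p ∈ O, ¬p.IsDiag ∧ ∀ w ∈ p, Γ.Adj v w)
    (hOinv : ∀ p ∈ O, ∀ g ∈ G, g v = v → p.map ⇑g ∈ O) {g : Equiv.Perm V}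
    (hgΓ : IsAut Γ g) (hgv : g v = v) (hlift : IsAut (truncT Γ G v O) (liftPerm Γ g hgΓ)) :
    ∀ p ∈ O, p.map ⇑g ∈ O := by
  intro p
  induction p using Sym2.ind with
  | _ w w' =>
    intro hp
    obtain ⟨hdiag, hmem⟩ := hOsub _ hp
    let x : {p : V × V // Γ.Adj p.1 p.2} := ⟨(v, w), hmem w (Sym2.mem_mk_left w w')⟩
    let y : {p : V × V // Γ.Adj p.1 p.2} := ⟨(v, w'), hmem w' (Sym2.mem_mk_right w w')⟩
    have hxy : x ≠ y := fun h => hdiag (Sym2.mk_isDiag_iff.2 (congrArg (·.1.2) h))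
    have hadj := (hlift x y).2 ((truncT_adj_iff_of_fst_eq hOinv rfl rfl).2 ⟨hxy, hp⟩)
    simpa using ((truncT_adj_iff_of_fst_eq hOinv (by simp [x, hgv]) (by simp [y, hgv])).1 hadj).2

end Truncation

theorem stmt10_general {V : Type*}
    (Γ : SimpleGraph V) (G : Subgroup (Equiv.Perm V)) (v : V) (O : Set (Sym2 V))
    (hGtrans : ∀ a b : V, ∃ g ∈ G, g a = b)
    (hOsub : ∀ p ∈ O, ¬ p.IsDiag ∧ ∀ w ∈ p, Γ.Adj v w)
    (hOinv : ∀ p ∈ O, ∀ g ∈ G, g v = v → p.map ⇑g ∈ O)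
    (K : Subgroup (Equiv.Perm V)) (hK : ∀ g ∈ K, IsAut Γ g) (hGK : G ≤ K) :
    ((∀ g (hgK : g ∈ K), IsAut (truncT Γ (↑G) v O) (liftPerm Γ g (hK g hgK))) ↔
      (∀ p ∈ O, ∀ g ∈ K, g v = v → p.map ⇑g ∈ O)) ∧
    (∀ g (hgG : g ∈ G), IsAut (truncT Γ (↑G) v O) (liftPerm Γ g (hK g (hGK hgG)))) :=
  ⟨⟨fun hlift p hp g hg hgv => map_mem_of_isAut_liftPerm hOsub hOinv _ hgv (hlift g hg) p hp,
      fun hO _ hg => isAut_truncT_liftPerm hGtrans hGK hO hg _⟩,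
    fun _ hg => isAut_truncT_liftPerm hGtrans le_rfl hOinv hg _⟩

/-- A subgroup `K ≤ Aut(Γ)` containing `G` lifts to
`Aut(T(Γ,G;O_v))` — i.e. for every `g ∈ K` the permutation `(u,w) ↦ (u^g, w^g)` of the
darts is an automorphism of `T(Γ,G;O_v)` — if and only if `O_v` is a union of orbits of
the induced action of `K_v` on the `2`-subsets of `Γ(v)`. In particular, `G` itself
lifts to `Aut(T(Γ,G;O_v))`. -/
theorem stmt10 {V : Type*} [Fintype V] [DecidableEq V]
    (Γ : SimpleGraph V) (G : Subgroup (Equiv.Perm V)) (v : V) (O : Set (Sym2 V))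
    (hGaut : ∀ g ∈ G, IsAut Γ g)
    (hGtrans : ∀ a b : V, ∃ g ∈ G, g a = b)
    (hOsub : ∀ p ∈ O, ¬ p.IsDiag ∧ ∀ w ∈ p, Γ.Adj v w)
    (hOinv : ∀ p ∈ O, ∀ g ∈ G, g v = v → p.map ⇑g ∈ O)
    (K : Subgroup (Equiv.Perm V)) (hK : ∀ g ∈ K, IsAut Γ g) (hGK : G ≤ K) :
    ((∀ g (hgK : g ∈ K), IsAut (truncT Γ (↑G) v O) (liftPerm Γ g (hK g hgK))) ↔
      (∀ p ∈ O, ∀ g ∈ K, g v = v → p.map ⇑g ∈ O)) ∧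
    (∀ g (hgG : g ∈ G), IsAut (truncT Γ (↑G) v O) (liftPerm Γ g (hK g (hGK hgG)))) :=
  stmt10_general Γ G v O hGtrans hOsub hOinv K hK hGK
end

section
/- Let Γ, G, v, O_v and T(Γ,G;O_v) be as in the construction. An automorphism h ∈ Aut(Γ) lifts to Aut(T(Γ,G;O_v)) (that is, the permutation (u,w) ↦ (u^h,w^h) of the vertex set of T(Γ,G;O_v) is an automorphism of T(Γ,G;O_v)) if and only if O_v is a union of orbits of the induced action of the stabilizer ⟨G,h⟩_v of v in the subgroup generated by G and h, acting on the 2-element subsets of Γ(v). -/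
/-!
Both sides say that `h` preserves the ternary relation
`R(u,w,w') :⟺ ∃ g ∈ G, u^g = v ∧ {w^g, w'^g} ∈ O_v`: on darts with a common tail its instances
are exactly the red edges of `T(Γ,G;O_v)`, while blue edges are preserved by every lift. The
permutations preserving `R` form a subgroup containing `G`, so `h` preserves `R` iff `⟨G,h⟩`
does. Finally, a subgroup `H ≥ G` preserves `R` iff `H_v` preserves `O_v`: one direction
applies `R` at `u = v` and uses the `G_v`-invariance of `O_v`; for the other, if `u^k = v` and
`u^{σg} = v` with `k, g ∈ G`, then `k⁻¹σg ∈ H_v` maps `{w^k, w'^k}` to `{w^{σg}, w'^{σg}}`.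
-/

open SimpleGraph

variable {V : Type*}

def relStabilizer (R : V → V → V → Prop) : Subgroup (Equiv.Perm V) where
  carrier := {σ | ∀ a b c, R (σ a) (σ b) (σ c) ↔ R a b c}
  mul_mem' hσ hτ a b c := (hσ _ _ _).trans (hτ a b c)
  one_mem' _ _ _ := Iff.rfl
  inv_mem' {σ} hσ a b c := by simpa using (hσ (σ⁻¹ a) (σ⁻¹ b) (σ⁻¹ c)).symm

lemma le_relStabilizer_of_forall_imp {R : V → V → V → Prop} {H : Subgroup (Equiv.Perm V)}
    (hR : ∀ σ ∈ H, ∀ a b c, R a b c → R (σ a) (σ b) (σ c)) : H ≤ relStabilizer R := by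
  intro σ hσ a b c
  refine ⟨fun hσR => ?_, hR σ hσ a b c⟩
  simpa using hR σ⁻¹ (inv_mem hσ) _ _ _ hσR

lemma isAut_fromRel_of_forall_iff {W : Type*} {r : W → W → Prop} {σ : Equiv.Perm W}
    (hr : ∀ x y, r (σ x) (σ y) ↔ r x y) : IsAut (fromRel r) σ := by
  intro x y
  simp only [fromRel_adj, σ.injective.ne_iff, hr]

section RedRel

variable {G : Subgroup (Equiv.Perm V)} {v : V} {O : Set (Sym2 V)}

variable (G v O) in
def redRel (u w w' : V) : Prop := ∃ g ∈ G, g u = v ∧ s(g w, g w') ∈ O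

lemma redRel.symm {u w w' : V} (hr : redRel G v O u w w') : redRel G v O u w' w := by
  obtain ⟨g, hg, hgu, hgO⟩ := hr
  exact ⟨g, hg, hgu, Sym2.eq_swap ▸ hgO⟩

lemma redRel.adj {Γ : SimpleGraph V} (hGaut : ∀ g ∈ G, IsAut Γ g)
    (hOsub : ∀ p ∈ O, ¬ p.IsDiag ∧ ∀ w ∈ p, Γ.Adj v w) {u w w' : V}
    (hr : redRel G v O u w w') : Γ.Adj u w ∧ Γ.Adj u w' ∧ w ≠ w' := by
  obtain ⟨g, hg, rfl, hgO⟩ := hr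
  obtain ⟨hdiag, hadj⟩ := hOsub _ hgO
  refine ⟨(hGaut g hg u w).1 (hadj _ (Sym2.mem_mk_left _ _)),
    (hGaut g hg u w').1 (hadj _ (Sym2.mem_mk_right _ _)), fun hww' => hdiag ?_⟩
  simp [hww']

lemma le_relStabilizer_redRel : G ≤ relStabilizer (redRel G v O) :=
  le_relStabilizer_of_forall_imp fun σ hσ _ _ _ ⟨k, hk, hku, hkO⟩ =>
    ⟨k * σ⁻¹, mul_mem hk (inv_mem hσ), by simpa using hku, by simpa using hkO⟩

lemma map_mem_of_le_relStabilizer (hOinv : ∀ p ∈ O, ∀ g ∈ G, g v = v → p.map ⇑g ∈ O)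
    {H : Subgroup (Equiv.Perm V)} (hH : H ≤ relStabilizer (redRel G v O)) :
    ∀ p ∈ O, ∀ g ∈ H, g v = v → p.map ⇑g ∈ O := by
  intro p hp g hg hgv
  induction p using Sym2.ind with
  | _ w w' =>
    have hvww' : redRel G v O v w w' := ⟨1, one_mem G, rfl, hp⟩
    obtain ⟨k, hk, hkv, hkO⟩ := (hH hg v w w').2 hvww'
    rw [hgv] at hkv
    have hkv' : k⁻¹ v = v := by rw [Equiv.Perm.inv_eq_iff_eq, hkv]
    simpa using hOinv _ hkO k⁻¹ (inv_mem hk) hkv'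

lemma le_relStabilizer_of_map_mem (hGtrans : ∀ a b : V, ∃ g ∈ G, g a = b)
    {H : Subgroup (Equiv.Perm V)} (hGH : G ≤ H)
    (hO : ∀ p ∈ O, ∀ g ∈ H, g v = v → p.map ⇑g ∈ O) : H ≤ relStabilizer (redRel G v O) := by
  refine le_relStabilizer_of_forall_imp fun σ hσ u w w' ⟨k, hk, hku, hkO⟩ => ?_
  obtain ⟨g, hg, hgu⟩ := hGtrans (σ u) v
  have hfix : (g * σ * k⁻¹) v = v := by simp [← hku, hgu]
  have hmem : g * σ * k⁻¹ ∈ H := mul_mem (mul_mem (hGH hg) hσ) (inv_mem (hGH hk))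
  exact ⟨g, hg, hgu, by simpa using hO _ hkO _ hmem hfix⟩

lemma truncT_adj_iff_redRel {Γ : SimpleGraph V} {u w w' : V} (hw : Γ.Adj u w)
    (hw' : Γ.Adj u w') (hne : w ≠ w') :
    (truncT Γ G v O).Adj ⟨(u, w), hw⟩ ⟨(u, w'), hw'⟩ ↔ redRel G v O u w w' := by
  have hdarts : (⟨(u, w), hw⟩ : {p : V × V // Γ.Adj p.1 p.2}) ≠ ⟨(u, w'), hw'⟩ := by simpa
  simp only [truncT, fromRel_adj, ne_eq, hdarts, not_false_eq_true, hw.ne, hw'.ne,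
    false_and, false_or, true_and]
  exact ⟨fun h => h.elim id redRel.symm, Or.inl⟩

lemma redRel_iff_of_isAut_truncT {Γ : SimpleGraph V} {h : Equiv.Perm V} {hh : IsAut Γ h}
    (hA : IsAut (truncT Γ G v O) (liftPerm Γ h hh)) {u w w' : V}
    (hw : Γ.Adj u w) (hw' : Γ.Adj u w') (hne : w ≠ w') :
    redRel G v O (h u) (h w) (h w') ↔ redRel G v O u w w' :=
  (truncT_adj_iff_redRel _ _ (h.injective.ne hne)).symm.trans
    ((hA ⟨(u, w), hw⟩ ⟨(u, w'), hw'⟩).trans (truncT_adj_iff_redRel hw hw' hne))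

lemma mem_relStabilizer_redRel {Γ : SimpleGraph V} (hGaut : ∀ g ∈ G, IsAut Γ g)
    (hOsub : ∀ p ∈ O, ¬ p.IsDiag ∧ ∀ w ∈ p, Γ.Adj v w) {h : Equiv.Perm V} (hh : IsAut Γ h)
    (hred : ∀ u w w', Γ.Adj u w → Γ.Adj u w' → w ≠ w' →
      (redRel G v O (h u) (h w) (h w') ↔ redRel G v O u w w')) :
    h ∈ relStabilizer (redRel G v O) := by
  intro u w w'
  constructor
  · intro hr
    obtain ⟨hw, hw', hne⟩ := hr.adj hGaut hOsub
    exact (hred u w w' ((hh u w).1 hw) ((hh u w').1 hw') (h.injective.ne_iff.1 hne)).1 hr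
  · intro hr
    obtain ⟨hw, hw', hne⟩ := hr.adj hGaut hOsub
    exact (hred u w w' hw hw' hne).2 hr

lemma isAut_truncT_liftPerm_s11 {Γ : SimpleGraph V} {h : Equiv.Perm V} (hh : IsAut Γ h)
    (hR : h ∈ relStabilizer (redRel G v O)) : IsAut (truncT Γ G v O) (liftPerm Γ h hh) := by
  refine isAut_fromRel_of_forall_iff fun x y => or_congr ?_ ?_
  · exact and_congr h.injective.eq_iff h.injective.eq_iff
  · exact and_congr h.injective.eq_iff (hR _ _ _)

end RedRel

theorem stmt11_general {V : Type*}
    (Γ : SimpleGraph V) (G : Subgroup (Equiv.Perm V)) (v : V) (O : Set (Sym2 V))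
    (hGaut : ∀ g ∈ G, IsAut Γ g)
    (hGtrans : ∀ a b : V, ∃ g ∈ G, g a = b)
    (hOsub : ∀ p ∈ O, ¬ p.IsDiag ∧ ∀ w ∈ p, Γ.Adj v w)
    (hOinv : ∀ p ∈ O, ∀ g ∈ G, g v = v → p.map ⇑g ∈ O)
    (h : Equiv.Perm V) (hh : IsAut Γ h) :
    IsAut (truncT Γ (↑G) v O) (liftPerm Γ h hh) ↔
      (∀ p ∈ O, ∀ g ∈ Subgroup.closure ((↑G : Set (Equiv.Perm V)) ∪ {h}),
        g v = v → p.map ⇑g ∈ O) := by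
  constructor
  · intro hA
    have hR : h ∈ relStabilizer (redRel G v O) := mem_relStabilizer_redRel hGaut hOsub hh
      fun _ _ _ hw hw' hne => redRel_iff_of_isAut_truncT hA hw hw' hne
    refine map_mem_of_le_relStabilizer hOinv ((Subgroup.closure_le _).2 ?_)
    exact Set.union_subset le_relStabilizer_redRel (Set.singleton_subset_iff.2 hR)
  · intro hO
    refine isAut_truncT_liftPerm_s11 hh (le_relStabilizer_of_map_mem hGtrans ?_ hO ?_)
    · exact fun g hg => Subgroup.subset_closure (Or.inl hg)
    · exact Subgroup.subset_closure (Or.inr rfl)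

/-- An automorphism `h` of `Γ` lifts to `Aut(T(Γ,G;O_v))` — i.e. the
permutation `(u,w) ↦ (u^h, w^h)` of the darts is an automorphism of `T(Γ,G;O_v)` — if and
only if `O_v` is a union of orbits of the induced action of the stabilizer of `v` in
`⟨G, h⟩` on the `2`-subsets of `Γ(v)`. -/
theorem stmt11 {V : Type*} [Fintype V] [DecidableEq V]
    (Γ : SimpleGraph V) (G : Subgroup (Equiv.Perm V)) (v : V) (O : Set (Sym2 V))
    (hGaut : ∀ g ∈ G, IsAut Γ g)
    (hGtrans : ∀ a b : V, ∃ g ∈ G, g a = b)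
    (hOsub : ∀ p ∈ O, ¬ p.IsDiag ∧ ∀ w ∈ p, Γ.Adj v w)
    (hOinv : ∀ p ∈ O, ∀ g ∈ G, g v = v → p.map ⇑g ∈ O)
    (h : Equiv.Perm V) (hh : IsAut Γ h) :
    IsAut (truncT Γ (↑G) v O) (liftPerm Γ h hh) ↔
      (∀ p ∈ O, ∀ g ∈ Subgroup.closure ((↑G : Set (Equiv.Perm V)) ∪ {h}),
        g v = v → p.map ⇑g ∈ O) :=
  stmt11_general Γ G v O hGaut hGtrans hOsub hOinv h hh
end

section
/- Let Γ be a vertex-transitive graph possessing a vertex-transitive group G of automorphisms admitting a nontrivial imprimitivity block system 𝔅 on V(Γ), and suppose there exists a block B ∈ 𝔅 such that each vertex of B has exactly one neighbor outside B and no two vertices of B have a neighbor in the same block B' ∈ 𝔅 with B' ≠ B. Then the quotient graph Γ_𝔅 is |B|-regular, the natural induced action of G on Γ_𝔅 is faithful, and this induced action of G on Γ_𝔅 is arc-transitive. -/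
/-! Transitivity spreads the hypotheses on `B` to every block: each vertex `x` has a unique
neighbour `m x` outside its block, `m` commutes with `G`, and `x ↦ [m x]` (the block of `m x`)
is injective on each block. Hence the neighbours of a block `C` in the quotient are the blocks
`[m x]`, `x ∈ C`, in bijection with `C`. An element fixing every block moves `x` and `m x`
inside their blocks, so injectivity forces it to fix `x`. Every arc of the quotient is the
image of an edge `{a, m a}`, and `g a = c` forces `g (m a) = m c`, which gives
arc-transitivity. -/

open SimpleGraph

variable {V : Type*}

/-- The quotient graph of `Γ` with respect to a partition (given as a setoid): two
blocks are adjacent iff they are distinct and contain adjacent representatives. -/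
def quotG {V : Type*} (Γ : SimpleGraph V) (σ : Setoid V) : SimpleGraph (Quotient σ) :=
  SimpleGraph.fromRel (fun B B' =>
    ∃ a b : V, Quotient.mk σ a = B ∧ Quotient.mk σ b = B' ∧ Γ.Adj a b)

def IsOutsideNeighborMap (Γ : SimpleGraph V) (σ : Setoid V) (m : V → V) : Prop :=
  ∀ x y, Γ.Adj x y ∧ ¬ σ.r y x ↔ y = m x

section QuotientGraph

variable {Γ : SimpleGraph V} {σ : Setoid V} {m : V → V}

theorem quotG_adj_iff {C D : Quotient σ} :
    (quotG Γ σ).Adj C D ↔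
      C ≠ D ∧ ∃ a b, Quotient.mk σ a = C ∧ Quotient.mk σ b = D ∧ Γ.Adj a b := by
  simp only [quotG, fromRel_adj]
  refine and_congr_right fun _ => ⟨?_, Or.inl⟩
  rintro (h | ⟨a, b, ha, hb, hab⟩)
  · exact h
  · exact ⟨b, a, hb, ha, hab.symm⟩

theorem IsOutsideNeighborMap.adj (hm : IsOutsideNeighborMap Γ σ m) (x : V) :
    Γ.Adj x (m x) ∧ ¬ σ.r (m x) x :=
  (hm x (m x)).2 rfl

theorem IsOutsideNeighborMap.not_rel_of_rel (hm : IsOutsideNeighborMap Γ σ m) {x b : V}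
    (hx : σ.r x b) : ¬ σ.r (m x) b :=
  fun h => (hm.adj x).2 (σ.trans' h (σ.symm' hx))

theorem IsOutsideNeighborMap.neighborSet_quotG (hm : IsOutsideNeighborMap Γ σ m) (c : V) :
    (quotG Γ σ).neighborSet (Quotient.mk σ c) =
      (fun x => Quotient.mk σ (m x)) '' {x | σ.r x c} := by
  ext D
  simp only [mem_neighborSet, quotG_adj_iff, Set.mem_image, Set.mem_ofPred_eq, Quotient.eq]
  constructor
  · rintro ⟨hne, a, b, hac, rfl, hab⟩
    have hba : ¬ σ.r b a := fun h => hne (Quotient.sound (σ.trans' (σ.symm' hac) (σ.symm' h)))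
    exact ⟨a, hac, by rw [(hm a b).1 ⟨hab, hba⟩]⟩
  · rintro ⟨x, hxc, rfl⟩
    exact ⟨fun h => hm.not_rel_of_rel hxc (σ.symm' (Quotient.eq.1 h)), x, m x, hxc, rfl,
      (hm.adj x).1⟩

theorem IsOutsideNeighborMap.ncard_neighborSet_quotG (hm : IsOutsideNeighborMap Γ σ m)
    (hsep : ∀ x x', σ.r x x' → σ.r (m x) (m x') → x = x') (c : V) :
    ((quotG Γ σ).neighborSet (Quotient.mk σ c)).ncard = {x | σ.r x c}.ncard := by
  rw [hm.neighborSet_quotG]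
  refine Set.InjOn.ncard_image fun x hx x' hx' h => hsep x x' ?_ (Quotient.eq.1 h)
  exact σ.trans' hx (σ.symm' hx')

theorem IsOutsideNeighborMap.map_apply (hm : IsOutsideNeighborMap Γ σ m) {g : Equiv.Perm V}
    (hg : IsAut Γ g) (hgσ : ∀ a b, σ.r (g a) (g b) ↔ σ.r a b) (x : V) :
    m (g x) = g (m x) :=
  ((hm (g x) (g (m x))).1 (by rw [hg, hgσ]; exact hm.adj x)).symm

theorem IsOutsideNeighborMap.eq_one_of_forall_mk_apply_eq (hm : IsOutsideNeighborMap Γ σ m)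
    (hsep : ∀ x x', σ.r x x' → σ.r (m x) (m x') → x = x') {g : Equiv.Perm V}
    (hg : IsAut Γ g) (hgσ : ∀ a b, σ.r (g a) (g b) ↔ σ.r a b)
    (hfix : ∀ a, Quotient.mk σ (g a) = Quotient.mk σ a) : g = 1 := by
  ext x
  refine (hsep x (g x) (Quotient.eq.1 (hfix x).symm) ?_).symm
  rw [hm.map_apply hg hgσ]
  exact Quotient.eq.1 (hfix (m x)).symm

end QuotientGraph

section TransitiveGroup

variable {Γ : SimpleGraph V} {σ : Setoid V} {G : Subgroup (Equiv.Perm V)}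

theorem rel_apply_iff_of_mem (hσinv : ∀ g ∈ G, ∀ a b : V, σ.r a b → σ.r (g a) (g b))
    {g : Equiv.Perm V} (hg : g ∈ G) (a b : V) : σ.r (g a) (g b) ↔ σ.r a b :=
  ⟨fun h => by simpa using hσinv g⁻¹ (inv_mem hg) _ _ h, hσinv g hg a b⟩

theorem exists_isOutsideNeighborMap (hGaut : ∀ g ∈ G, IsAut Γ g)
    (hGtrans : ∀ a b : V, ∃ g ∈ G, g a = b)
    (hσinv : ∀ g ∈ G, ∀ a b : V, σ.r a b → σ.r (g a) (g b)) {b₀ : V}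
    (hout : ∃! y, Γ.Adj b₀ y ∧ ¬ σ.r y b₀) : ∃ m, IsOutsideNeighborMap Γ σ m := by
  suffices h : ∀ x, ∃! y, Γ.Adj x y ∧ ¬ σ.r y x by
    choose m hm huniq using h
    exact ⟨m, fun x y => ⟨huniq x y, fun h => h ▸ hm x⟩⟩
  intro x
  obtain ⟨g, hg, rfl⟩ := hGtrans b₀ x
  have hgσ := rel_apply_iff_of_mem hσinv hg
  obtain ⟨y, hy, huniq⟩ := hout
  refine ⟨g y, ⟨(hGaut g hg _ _).2 hy.1, fun h => hy.2 ((hgσ _ _).1 h)⟩, fun z hz => ?_⟩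
  obtain ⟨z, rfl⟩ := g.surjective z
  rw [hGaut g hg, hgσ] at hz
  rw [huniq z hz]

theorem IsOutsideNeighborMap.eq_of_rel_of_separated {m : V → V}
    (hm : IsOutsideNeighborMap Γ σ m) {b₀ : V}
    (hsep₀ : ∀ x, σ.r x b₀ → ∀ x', σ.r x' b₀ → x ≠ x' → ∀ y y' : V,
      Γ.Adj x y → Γ.Adj x' y' → ¬ σ.r y b₀ → ¬ σ.r y' b₀ → ¬ σ.r y y')
    {x x' : V} (hx : σ.r x b₀) (hx' : σ.r x' b₀) (h : σ.r (m x) (m x')) : x = x' := by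
  by_contra hne
  exact hsep₀ x hx x' hx' hne _ _ (hm.adj x).1 (hm.adj x').1 (hm.not_rel_of_rel hx)
    (hm.not_rel_of_rel hx') h

theorem IsOutsideNeighborMap.eq_of_rel_of_rel {m : V → V} (hm : IsOutsideNeighborMap Γ σ m)
    (hGaut : ∀ g ∈ G, IsAut Γ g) (hGtrans : ∀ a b : V, ∃ g ∈ G, g a = b)
    (hσinv : ∀ g ∈ G, ∀ a b : V, σ.r a b → σ.r (g a) (g b)) {b₀ : V}
    (hsep₀ : ∀ x x', σ.r x b₀ → σ.r x' b₀ → σ.r (m x) (m x') → x = x')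
    (x x' : V) (hxx' : σ.r x x') (h : σ.r (m x) (m x')) : x = x' := by
  obtain ⟨g, hg, hgx⟩ := hGtrans x b₀
  have hgσ := rel_apply_iff_of_mem hσinv hg
  apply g.injective
  refine hsep₀ (g x) (g x') (hgx ▸ σ.refl' _) ?_ ?_
  · rw [← hgx, hgσ]
    exact σ.symm' hxx'
  · rwa [hm.map_apply (hGaut g hg) hgσ, hm.map_apply (hGaut g hg) hgσ, hgσ]

theorem ncard_setOf_rel_eq (hGtrans : ∀ a b : V, ∃ g ∈ G, g a = b)
    (hσinv : ∀ g ∈ G, ∀ a b : V, σ.r a b → σ.r (g a) (g b)) (b c : V) :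
    {x | σ.r x c}.ncard = {x | σ.r x b}.ncard := by
  obtain ⟨g, hg, rfl⟩ := hGtrans b c
  have himage : g '' {x | σ.r x b} = {x | σ.r x (g b)} := by
    ext y
    obtain ⟨y, rfl⟩ := g.surjective y
    simp only [g.injective.mem_set_image, Set.mem_ofPred_eq, rel_apply_iff_of_mem hσinv hg]
  rw [← himage, Set.ncard_image_of_injective _ g.injective]

theorem IsOutsideNeighborMap.quotG_arcTransitive {m : V → V}
    (hm : IsOutsideNeighborMap Γ σ m) (hGaut : ∀ g ∈ G, IsAut Γ g)
    (hGtrans : ∀ a b : V, ∃ g ∈ G, g a = b)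
    (hσinv : ∀ g ∈ G, ∀ a b : V, σ.r a b → σ.r (g a) (g b))
    (C C' D D' : Quotient σ) (hC : (quotG Γ σ).Adj C C') (hD : (quotG Γ σ).Adj D D') :
    ∃ g ∈ G, ∀ a b : V, Quotient.mk σ a = C → Quotient.mk σ b = C' →
      Quotient.mk σ (g a) = D ∧ Quotient.mk σ (g b) = D' := by
  obtain ⟨c, rfl⟩ := Quotient.mk_surjective C
  obtain ⟨d, rfl⟩ := Quotient.mk_surjective D
  rw [← mem_neighborSet, hm.neighborSet_quotG] at hC hD
  obtain ⟨a, hac, rfl⟩ := hC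
  obtain ⟨b, hbd, rfl⟩ := hD
  obtain ⟨g, hg, rfl⟩ := hGtrans a b
  have hgσ := rel_apply_iff_of_mem hσinv hg
  refine ⟨g, hg, fun a' b' ha' hb' => ⟨Quotient.eq.2 ?_, Quotient.eq.2 ?_⟩⟩
  · exact σ.trans' ((hgσ _ _).2 (σ.trans' (Quotient.eq.1 ha') (σ.symm' hac))) hbd
  · rw [hm.map_apply (hGaut g hg) hgσ, hgσ]
    exact Quotient.eq.1 hb'

end TransitiveGroup

theorem stmt13_general {V : Type*}
    (Γ : SimpleGraph V) (G : Subgroup (Equiv.Perm V))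
    (hGaut : ∀ g ∈ G, IsAut Γ g)
    (hGtrans : ∀ a b : V, ∃ g ∈ G, g a = b)
    (σ : Setoid V)
    (hσinv : ∀ g ∈ G, ∀ a b : V, σ.r a b → σ.r (g a) (g b))
    (b₀ : V) (B : Set V) (hB : B = {x : V | σ.r x b₀})
    (hBout : ∀ x ∈ B, ∃! y : V, Γ.Adj x y ∧ y ∉ B)
    (hBsep : ∀ x ∈ B, ∀ x' ∈ B, x ≠ x' → ∀ y y' : V, Γ.Adj x y → Γ.Adj x' y' →
      y ∉ B → y' ∉ B → ¬ σ.r y y') :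
    (∀ C : Quotient σ, ((quotG Γ σ).neighborSet C).ncard = B.ncard) ∧
    (∀ g ∈ G, (∀ a : V, Quotient.mk σ (g a) = Quotient.mk σ a) → g = 1) ∧
    (∀ C C' D D' : Quotient σ, (quotG Γ σ).Adj C C' → (quotG Γ σ).Adj D D' →
      ∃ g ∈ G, ∀ a b : V, Quotient.mk σ a = C → Quotient.mk σ b = C' →
        Quotient.mk σ (g a) = D ∧ Quotient.mk σ (g b) = D') := by
  subst hB
  obtain ⟨m, hm⟩ :=
    exists_isOutsideNeighborMap hGaut hGtrans hσinv (hBout b₀ (σ.refl' b₀))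
  have hsep := hm.eq_of_rel_of_rel hGaut hGtrans hσinv
    fun x x' hx hx' => hm.eq_of_rel_of_separated hBsep hx hx'
  refine ⟨fun C => ?_, fun g hg hfix => ?_, hm.quotG_arcTransitive hGaut hGtrans hσinv⟩
  · obtain ⟨c, rfl⟩ := Quotient.mk_surjective C
    rw [hm.ncard_neighborSet_quotG hsep, ncard_setOf_rel_eq hGtrans hσinv b₀]
  · exact hm.eq_one_of_forall_mk_apply_eq hsep (hGaut g hg) (rel_apply_iff_of_mem hσinv hg) hfix

/-- Let `Γ` be a vertex-transitive graph with a vertex-transitive group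
`G` of automorphisms admitting a nontrivial imprimitivity block system `𝔅` (encoded by a
`G`-invariant equivalence `σ`), and let `B` be a block each of whose vertices has exactly
one neighbor outside `B`, no two vertices of `B` having neighbors in the same other
block. Then the quotient graph `Γ_𝔅` is `|B|`-regular, the natural induced action of `G`
on `Γ_𝔅` is faithful, and this induced action is arc-transitive. -/
theorem stmt13 {V : Type*} [Fintype V] [DecidableEq V]
    (Γ : SimpleGraph V) (G : Subgroup (Equiv.Perm V))
    (hGaut : ∀ g ∈ G, IsAut Γ g)
    (hGtrans : ∀ a b : V, ∃ g ∈ G, g a = b)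
    (σ : Setoid V)
    (hσinv : ∀ g ∈ G, ∀ a b : V, σ.r a b → σ.r (g a) (g b))
    (hnontriv₁ : ∃ a b : V, σ.r a b ∧ a ≠ b) (hnontriv₂ : ∃ a b : V, ¬ σ.r a b)
    (b₀ : V) (B : Set V) (hB : B = {x : V | σ.r x b₀})
    (hBout : ∀ x ∈ B, ∃! y : V, Γ.Adj x y ∧ y ∉ B)
    (hBsep : ∀ x ∈ B, ∀ x' ∈ B, x ≠ x' → ∀ y y' : V, Γ.Adj x y → Γ.Adj x' y' →
      y ∉ B → y' ∉ B → ¬ σ.r y y') :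
    (∀ C : Quotient σ, ((quotG Γ σ).neighborSet C).ncard = B.ncard) ∧
    (∀ g ∈ G, (∀ a : V, Quotient.mk σ (g a) = Quotient.mk σ a) → g = 1) ∧
    (∀ C C' D D' : Quotient σ, (quotG Γ σ).Adj C C' → (quotG Γ σ).Adj D D' →
      ∃ g ∈ G, ∀ a b : V, Quotient.mk σ a = C → Quotient.mk σ b = C' →
        Quotient.mk σ (g a) = D ∧ Quotient.mk σ (g b) = D') :=
  stmt13_general Γ G hGaut hGtrans σ hσinv b₀ B hB hBout hBsep
end
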